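/- Let a ∈ ℝ with a ≠ 1 and define A(t) as the 2×2 matrix with rows (1, t) and (0, a). Then the sum of the Peano–Baker series with base point t₀ = 0 is Φ_A(t; 0) = the 2×2 matrix with rows (e^t, f(t)) and (0, e^{a t}), where f(t) = (e^t − e^{a t} − (1 − a)·t·e^{a t}) / (1 − a)². -/

import Mathlib

/-!
The matrix `A t` is upper triangular with constant diagonal `diag(1, a)`, so by induction the
`n`-th iterated integral is `!![tⁿ/n!, cₙ tⁿ⁺¹/(n+1)!; 0, (a t)ⁿ/n!]` with
`cₙ = ∑_{j<n} (j+1) aʲ`. The diagonal entries sum to `eᵗ` and `eᵃᵗ`. For `a ≠ 1` the identity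
`(1-a)² cₙ = 1 - (n+1) aⁿ + n aⁿ⁺¹` splits the top-right entry into the terms of the series
`∑ tⁿ⁺¹/(n+1)! = eᵗ - 1`, `∑ (a t)ⁿ⁺¹/(n+1)! = eᵃᵗ - 1` and `∑ t (a t)ⁿ/n! = t eᵃᵗ`.
-/

attribute [local instance] Matrix.normedAddCommGroup Matrix.normedSpace

/-- The iterated Peano–Baker integrals with base point `0`: `pbIter A 0 = 1` (identity
matrix) and `pbIter A (n+1) t = ∫_0^t A τ * pbIter A n τ dτ`. -/
noncomputable def pbIter (A : ℝ → Matrix (Fin 2) (Fin 2) ℝ) :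
    ℕ → ℝ → Matrix (Fin 2) (Fin 2) ℝ
  | 0 => fun _ => 1
  | n + 1 => fun t => ∫ τ in (0 : ℝ)..t, A τ * pbIter A n τ

open MeasureTheory Finset
open scoped Nat

theorem Matrix.intervalIntegral_apply {m n : Type*} [Fintype m] [Fintype n]
    {f : ℝ → Matrix m n ℝ} {a b : ℝ}
    (hf : ∀ i j, IntervalIntegrable (fun τ => f τ i j) volume a b) (i : m) (j : n) :
    (∫ τ in a..b, f τ) i j = ∫ τ in a..b, f τ i j :=
  (((ContinuousLinearMap.proj j : (n → ℝ) →L[ℝ] ℝ).comp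
    (ContinuousLinearMap.proj i : (m → n → ℝ) →L[ℝ] n → ℝ)).intervalIntegral_comp_comm
      (intervalIntegrable_iff.2 <| Integrable.of_eval fun i =>
        Integrable.of_eval fun j => intervalIntegrable_iff.1 (hf i j))).symm

theorem Matrix.fin_two_congr {α : Type*} {a b c d a' b' c' d' : α} (ha : a = a') (hb : b = b')
    (hc : c = c') (hd : d = d') : !![a, b; c, d] = !![a', b'; c', d'] := by
  subst ha hb hc hd; rfl

theorem Matrix.intervalIntegral_fin_two {f₁₁ f₁₂ f₂₁ f₂₂ : ℝ → ℝ} {a b : ℝ}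
    (h₁₁ : IntervalIntegrable f₁₁ volume a b) (h₁₂ : IntervalIntegrable f₁₂ volume a b)
    (h₂₁ : IntervalIntegrable f₂₁ volume a b) (h₂₂ : IntervalIntegrable f₂₂ volume a b) :
    ∫ τ in a..b, !![f₁₁ τ, f₁₂ τ; f₂₁ τ, f₂₂ τ] =
      !![∫ τ in a..b, f₁₁ τ, ∫ τ in a..b, f₁₂ τ; ∫ τ in a..b, f₂₁ τ, ∫ τ in a..b, f₂₂ τ] := by
  ext i j
  rw [Matrix.intervalIntegral_apply fun i j => by fin_cases i <;> fin_cases j <;> assumption]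
  fin_cases i <;> fin_cases j <;> rfl

theorem Matrix.hasSum_fin_two {ι α : Type*} [AddCommMonoid α] [TopologicalSpace α]
    {p q r s : ι → α} {P Q R S : α} (hp : HasSum p P) (hq : HasSum q Q) (hr : HasSum r R)
    (hs : HasSum s S) : HasSum (fun k => !![p k, q k; r k, s k]) !![P, Q; R, S] :=
  Pi.hasSum.2 fun i => Pi.hasSum.2 fun j => by
    fin_cases i <;> fin_cases j <;> simpa

theorem Real.hasSum_pow_div_factorial (x : ℝ) : HasSum (fun n => x ^ n / n !) (exp x) :=
  Real.exp_eq_exp_ℝ ▸ NormedSpace.expSeries_div_hasSum_exp x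

theorem Real.hasSum_pow_succ_div_factorial (x : ℝ) :
    HasSum (fun n => x ^ (n + 1) / (n + 1)!) (exp x - 1) := by
  simpa using (hasSum_nat_add_iff' 1).2 (hasSum_pow_div_factorial x)

def pbCoeff (a : ℝ) (n : ℕ) : ℝ := ∑ j ∈ range n, (j + 1) * a ^ j

theorem pbCoeff_succ (a : ℝ) (n : ℕ) : pbCoeff a (n + 1) = pbCoeff a n + (n + 1) * a ^ n := by
  simp [pbCoeff, sum_range_succ]

theorem one_sub_sq_mul_pbCoeff (a : ℝ) (n : ℕ) :
    (1 - a) ^ 2 * pbCoeff a n = 1 - (n + 1) * a ^ n + n * a ^ (n + 1) := by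
  induction n with
  | zero => simp [pbCoeff]
  | succ n ih =>
    rw [pbCoeff_succ, mul_add, ih]
    push_cast
    ring

theorem pbIter_eq (a : ℝ) (A : ℝ → Matrix (Fin 2) (Fin 2) ℝ) (hA : ∀ t, A t = !![1, t; 0, a])
    (n : ℕ) (t : ℝ) :
    pbIter A n t = !![t ^ n / n !, pbCoeff a n * t ^ (n + 1) / (n + 1)!; 0, (a * t) ^ n / n !] := by
  induction n generalizing t with
  | zero =>
    rw [pbIter, Matrix.one_fin_two]
    simp [pbCoeff]
  | succ n ih =>
    have hmul : (fun τ : ℝ => A τ * pbIter A n τ) = fun τ : ℝ =>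
        !![1 / n ! * τ ^ n, (pbCoeff a n / (n + 1)! + a ^ n / n !) * τ ^ (n + 1);
          0, a ^ (n + 1) / n ! * τ ^ n] := by
      funext τ
      rw [hA, ih, Matrix.mul_fin_two]
      exact Matrix.fin_two_congr (by ring) (by ring) (by ring) (by ring)
    have hmonomial (c : ℝ) (k : ℕ) : IntervalIntegrable (fun τ : ℝ => c * τ ^ k) volume 0 t :=
      (continuous_const.mul (continuous_pow k)).intervalIntegrable _ _
    show (∫ τ in (0 : ℝ)..t, A τ * pbIter A n τ) = _
    rw [hmul, Matrix.intervalIntegral_fin_two (hmonomial _ _) (hmonomial _ _)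
      intervalIntegrable_const (hmonomial _ _)]
    simp only [intervalIntegral.integral_const_mul, integral_pow, intervalIntegral.integral_zero,
      zero_pow (Nat.succ_ne_zero _), sub_zero, pbCoeff_succ, Nat.factorial_succ, mul_pow]
    refine Matrix.fin_two_congr ?_ ?_ rfl ?_ <;> (push_cast; field_simp)

theorem hasSum_pbCoeff {a : ℝ} (ha : a ≠ 1) (t : ℝ) :
    HasSum (fun n => pbCoeff a n * t ^ (n + 1) / (n + 1)!)
      ((Real.exp t - Real.exp (a * t) - (1 - a) * t * Real.exp (a * t)) / (1 - a) ^ 2) := by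
  have h1a : (1 - a) ^ 2 ≠ 0 := pow_ne_zero 2 (sub_ne_zero.2 ha.symm)
  have hterm (n : ℕ) : pbCoeff a n * t ^ (n + 1) / (n + 1)! =
      (t ^ (n + 1) / (n + 1)! - (a * t) ^ (n + 1) / (n + 1)! -
        (1 - a) * t * ((a * t) ^ n / n !)) / (1 - a) ^ 2 := by
    rw [eq_div_iff h1a]
    have h := one_sub_sq_mul_pbCoeff a n
    simp only [Nat.factorial_succ]
    push_cast
    field_simp
    linear_combination t ^ (n + 1) * h
  simp_rw [hterm, ← sub_sub_sub_cancel_right (Real.exp t) (Real.exp (a * t)) 1]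
  exact (((Real.hasSum_pow_succ_div_factorial t).sub
    (Real.hasSum_pow_succ_div_factorial (a * t))).sub
      ((Real.hasSum_pow_div_factorial (a * t)).mul_left ((1 - a) * t))).div_const _

theorem stmt18 (a : ℝ) (ha : a ≠ 1) (A : ℝ → Matrix (Fin 2) (Fin 2) ℝ)
    (hA : ∀ t, A t = !![1, t; 0, a]) :
    ∀ t : ℝ,
      ∑' n : ℕ, pbIter A n t =
        !![Real.exp t,
            (Real.exp t - Real.exp (a * t) - (1 - a) * t * Real.exp (a * t)) / (1 - a) ^ 2;
          0, Real.exp (a * t)] := by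
  intro t
  simp_rw [pbIter_eq a A hA]
  exact (Matrix.hasSum_fin_two (Real.hasSum_pow_div_factorial t) (hasSum_pbCoeff ha t)
    hasSum_zero (Real.hasSum_pow_div_factorial (a * t))).tsum_eq
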